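/- arXiv:1508.06671 — 2 statements merged into one kernel-verified Lean document; each statement's English description precedes it below -/
import Mathlib

section
/- Let φ: [0,∞) → [0,∞) be continuous, non-decreasing, positive on (0,∞), of at most linear growth, with ∫₀₊ dx/φ(x) = +∞. For γ, ε ≥ 0 let u^{γ,ε} be the unique solution of u(t) = γ + ∫ₜ¹ (φ(u(s)) + ε) ds. Then for each fixed t ∈ [0,1] and ε ≥ 0, the map γ ↦ u^{γ,ε}(t) is continuous, and for fixed γ the map ε ↦ u^{γ,ε}(t) is continuous. -/
open MeasureTheory Set Filter Topology

/-- A continuous nonnegative solution on `[0,1]` of the backward integral equation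
`u t = γ + ∫ₜ¹ (φ (u s) + ε) ds`. -/
def IsSolODE (φ : ℝ → ℝ) (ε γ : ℝ) (u : ℝ → ℝ) : Prop :=
  ContinuousOn u (Set.Icc 0 1) ∧ (∀ t ∈ Set.Icc (0:ℝ) 1, 0 ≤ u t) ∧
    ∀ t ∈ Set.Icc (0:ℝ) 1, u t = γ + ∫ s in Set.Ioc t 1, (φ (u s) + ε)

/-- The Osgood condition `∫₀₊ dx / φ x = +∞`. -/
def OsgoodCondition (φ : ℝ → ℝ) : Prop :=
  ∀ δ > (0:ℝ), ∫⁻ x in Set.Ioc (0:ℝ) δ, ENNReal.ofReal (1 / φ x) = ⊤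

/-!
Along a solution with `φ γ + ε > 0`, separation of variables gives
`∫_γ^{u(t)} dz / (φ z + ε) = 1 - t`. Comparing these identities for two parameter pairs shows
that `u^{γ,ε}(t)` is monotone in `(γ, ε)` and locally Lipschitz wherever `φ γ + ε` stays away
from `0`, i.e. away from `γ = ε = 0`. At the origin the Osgood condition forces `u^{0,0} = 0`,
and `u^{γ,ε}(t) < η` as soon as `γ ≤ δ` and `ε ≤ φ δ`, where `∫_δ^η dz / φ z > 2`: otherwise the
identity would make `1 - t` exceed `1`. Hence `(γ, ε) ↦ u^{γ,ε}(t)` is jointly continuous on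
`[0, ∞)²`.
-/

lemma mul_abs_sub_le_abs_intervalIntegral {f : ℝ → ℝ} {a b m : ℝ}
    (hf : IntervalIntegrable f volume a b) (hm : ∀ x ∈ uIcc a b, m ≤ f x) :
    m * |b - a| ≤ |∫ x in a..b, f x| := by
  wlog hab : a ≤ b generalizing a b
  · rw [abs_sub_comm, intervalIntegral.integral_symm, abs_neg]
    exact this hf.symm (uIcc_comm a b ▸ hm) (le_of_not_ge hab)
  have := intervalIntegral.integral_mono_on hab intervalIntegrable_const hf
    fun x hx => hm x (uIcc_of_le hab ▸ hx)
  rw [intervalIntegral.integral_const, smul_eq_mul, mul_comm] at this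
  rw [abs_of_nonneg (sub_nonneg.2 hab)]
  exact this.trans (le_abs_self _)

lemma abs_inv_sub_inv_le {x y d : ℝ} (hd : 0 < d) (hx : d ≤ x) (hy : d ≤ y) :
    |x⁻¹ - y⁻¹| ≤ |y - x| / d ^ 2 := by
  have hx0 := hd.trans_le hx
  have hy0 := hd.trans_le hy
  rw [inv_sub_inv hx0.ne' hy0.ne', abs_div, abs_of_pos (mul_pos hx0 hy0), sq]
  gcongr

lemma continuousOn_inv_add {φ : ℝ → ℝ} (hφc : ContinuousOn φ (Ici 0))
    (hφm : MonotoneOn φ (Ici 0)) {ε c M : ℝ} (hc : 0 ≤ c) (hpos : 0 < φ c + ε) :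
    ContinuousOn (fun z => (φ z + ε)⁻¹) (Icc c M) :=
  ((hφc.mono fun _ hz => hc.trans hz.1).add continuousOn_const).inv₀ fun _ hz =>
    (hpos.trans_le (add_le_add_left (hφm hc (hc.trans hz.1) hz.1) ε)).ne'

lemma OsgoodCondition.exists_lt_integral_inv {φ : ℝ → ℝ} (hφc : ContinuousOn φ (Ici 0))
    (hφpos : ∀ x > (0:ℝ), 0 < φ x) (hOsg : OsgoodCondition φ) {c : ℝ} (hc : 0 < c) (K : ℝ) :
    ∃ δ ∈ Ioo 0 c, K < ∫ z in δ..c, (φ z)⁻¹ := by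
  by_contra! hle
  set a : ℕ → ℝ := fun n => c / (n + 2)
  have ha : ∀ n, a n ∈ Ioo 0 c := fun n =>
    ⟨by positivity, div_lt_self hc (by linarith [n.cast_nonneg (α := ℝ)])⟩
  have hint : ∀ n, IntegrableOn (fun z => (φ z)⁻¹) (Ioc (a n) c) := fun n =>
    ((hφc.mono fun _ hz => (ha n).1.le.trans hz.1).inv₀ fun z hz =>
      (hφpos z ((ha n).1.trans_le hz.1)).ne').integrableOn_Icc.mono_set Ioc_subset_Icc_self
  have hlim : Tendsto a atTop (𝓝 0) :=
    tendsto_const_nhds.div_atTop (tendsto_natCast_atTop_atTop.atTop_add tendsto_const_nhds)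
  have hfin : IntegrableOn (fun z => (φ z)⁻¹) (Ioc 0 c) :=
    integrableOn_Ioc_of_intervalIntegral_norm_bounded (I := K) hint hlim tendsto_const_nhds
      (Eventually.of_forall fun n => by
        rw [← intervalIntegral.integral_of_le (ha n).2.le]
        refine le_of_eq_of_le (intervalIntegral.integral_congr fun z hz => ?_) (hle _ (ha n))
        rw [uIcc_of_le (ha n).2.le] at hz
        exact Real.norm_of_nonneg (inv_pos.2 (hφpos z ((ha n).1.trans_le hz.1))).le)
  have := hfin.lintegral_lt_top
  simp only [← one_div, hOsg c hc] at this
  exact lt_irrefl _ this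

namespace IsSolODE

variable {φ : ℝ → ℝ} {ε γ : ℝ} {w : ℝ → ℝ}

lemma integrand_continuousOn (hφc : ContinuousOn φ (Ici 0)) (hw : IsSolODE φ ε γ w) :
    ContinuousOn (fun s => φ (w s) + ε) (Icc 0 1) :=
  (hφc.comp hw.1 fun s hs => hw.2.1 s hs).add continuousOn_const

lemma intervalIntegrable_integrand (hφc : ContinuousOn φ (Ici 0)) (hw : IsSolODE φ ε γ w)
    {t₁ t₂ : ℝ} (h₁ : t₁ ∈ Icc (0:ℝ) 1) (h₂ : t₂ ∈ Icc (0:ℝ) 1) :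
    IntervalIntegrable (fun s => φ (w s) + ε) volume t₁ t₂ :=
  ((hw.integrand_continuousOn hφc).mono (uIcc_subset_Icc h₁ h₂)).intervalIntegrable

lemma eq_add_intervalIntegral (hw : IsSolODE φ ε γ w) {t : ℝ} (ht : t ∈ Icc (0:ℝ) 1) :
    w t = γ + ∫ s in t..1, (φ (w s) + ε) := by
  rw [intervalIntegral.integral_of_le ht.2]
  exact hw.2.2 t ht

lemma apply_one (hw : IsSolODE φ ε γ w) : w 1 = γ := by
  simpa using hw.2.2 1 (right_mem_Icc.2 zero_le_one)

lemma param_nonneg (hw : IsSolODE φ ε γ w) : 0 ≤ γ :=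
  hw.apply_one ▸ hw.2.1 1 (right_mem_Icc.2 zero_le_one)

lemma antitoneOn (hφc : ContinuousOn φ (Ici 0)) (hφnn : ∀ x ≥ (0:ℝ), 0 ≤ φ x) (hε : 0 ≤ ε)
    (hw : IsSolODE φ ε γ w) : AntitoneOn w (Icc 0 1) := by
  intro t₁ h₁ t₂ h₂ h12
  have hsplit := intervalIntegral.integral_add_adjacent_intervals
    (hw.intervalIntegrable_integrand hφc h₁ h₂)
    (hw.intervalIntegrable_integrand hφc h₂ (right_mem_Icc.2 zero_le_one))
  have hnonneg : 0 ≤ ∫ s in t₁..t₂, (φ (w s) + ε) :=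
    intervalIntegral.integral_nonneg h12 fun s hs =>
      add_nonneg (hφnn _ (hw.2.1 s ⟨h₁.1.trans hs.1, hs.2.trans h₂.2⟩)) hε
  rw [hw.eq_add_intervalIntegral h₁, hw.eq_add_intervalIntegral h₂]
  linarith

lemma le_apply (hφc : ContinuousOn φ (Ici 0)) (hφnn : ∀ x ≥ (0:ℝ), 0 ≤ φ x) (hε : 0 ≤ ε)
    (hw : IsSolODE φ ε γ w) {t : ℝ} (ht : t ∈ Icc (0:ℝ) 1) : γ ≤ w t :=
  hw.apply_one ▸ hw.antitoneOn hφc hφnn hε ht (right_mem_Icc.2 zero_le_one) ht.2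

lemma hasDerivAt (hφc : ContinuousOn φ (Ici 0)) (hw : IsSolODE φ ε γ w) {t : ℝ}
    (ht : t ∈ Ioo (0:ℝ) 1) : HasDerivAt w (-(φ (w t) + ε)) t := by
  have hg := hw.integrand_continuousOn hφc
  have hnhds : Icc (0:ℝ) 1 ∈ 𝓝 t := Icc_mem_nhds ht.1 ht.2
  have hF : HasDerivAt (fun r => ∫ s in (1:ℝ)..r, (φ (w s) + ε)) (φ (w t) + ε) t :=
    intervalIntegral.integral_hasDerivAt_right
      (hw.intervalIntegrable_integrand hφc (right_mem_Icc.2 zero_le_one) (Ioo_subset_Icc_self ht))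
      ((hg.mono Ioo_subset_Icc_self).stronglyMeasurableAtFilter isOpen_Ioo t ht)
      (hg.continuousAt hnhds)
  refine (((hasDerivAt_const t γ).sub hF).congr_deriv (zero_sub _)).congr_of_eventuallyEq ?_
  filter_upwards [hnhds] with r hr
  rw [Pi.sub_apply, hw.eq_add_intervalIntegral hr, intervalIntegral.integral_symm, ← sub_eq_add_neg]

/-- Separation of variables: the substitution `z = w s` turns `w' = -(φ w + ε)` into
`dz / (φ z + ε) = -ds`. -/
lemma integral_inv_eq (hφc : ContinuousOn φ (Ici 0)) (hφm : MonotoneOn φ (Ici 0))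
    (hφnn : ∀ x ≥ (0:ℝ), 0 ≤ φ x) (hε : 0 ≤ ε) (hw : IsSolODE φ ε γ w)
    {t₁ t₂ : ℝ} (h₁ : t₁ ∈ Icc (0:ℝ) 1) (h₂ : t₂ ∈ Icc (0:ℝ) 1) (h12 : t₁ ≤ t₂)
    (hpos : 0 < φ (w t₂) + ε) :
    ∫ z in w t₂..w t₁, (φ z + ε)⁻¹ = t₂ - t₁ := by
  have hsub : Icc t₁ t₂ ⊆ Icc 0 1 := Icc_subset_Icc h₁.1 h₂.2
  have hanti := hw.antitoneOn hφc hφnn hε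
  have hmaps : MapsTo w (Icc t₁ t₂) (Icc (w t₂) (w t₁)) := fun s hs =>
    ⟨hanti (hsub hs) h₂ hs.2, hanti h₁ (hsub hs) hs.1⟩
  have hcont := continuousOn_inv_add hφc hφm (M := w t₁) (hw.2.1 _ h₂) hpos
  have hcov := intervalIntegral.integral_comp_mul_deriv'' (g := fun z => (φ z + ε)⁻¹)
    (f' := fun s => -(φ (w s) + ε))
    (hw.1.mono (uIcc_of_le h12 ▸ hsub))
    (fun s hs => (hw.hasDerivAt hφc ⟨h₁.1.trans_lt (by simpa [h12] using hs.1),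
      (by simpa [h12] using hs.2 : s < t₂).trans_le h₂.2⟩).hasDerivWithinAt)
    ((hw.integrand_continuousOn hφc).neg.mono (uIcc_of_le h12 ▸ hsub))
    (hcont.mono (uIcc_of_le h12 ▸ hmaps.image_subset))
  have hminus : ∫ s in t₁..t₂, ((fun z => (φ z + ε)⁻¹) ∘ w) s * -(φ (w s) + ε)
      = ∫ _ in t₁..t₂, (-1 : ℝ) := by
    refine intervalIntegral.integral_congr fun s hs => ?_
    rw [uIcc_of_le h12] at hs
    have : φ (w s) + ε ≠ 0 :=
      (hpos.trans_le (add_le_add_left (hφm (hw.2.1 _ h₂) (hw.2.1 _ (hsub hs)) (hmaps hs).1) ε)).ne'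
    rw [Function.comp_apply, mul_neg, inv_mul_cancel₀ this]
  rw [intervalIntegral.integral_symm, ← hcov, hminus, intervalIntegral.integral_const]
  simp

lemma integral_inv_eq_one_sub (hφc : ContinuousOn φ (Ici 0)) (hφm : MonotoneOn φ (Ici 0))
    (hφnn : ∀ x ≥ (0:ℝ), 0 ≤ φ x) (hε : 0 ≤ ε) (hpos : 0 < φ γ + ε) (hw : IsSolODE φ ε γ w)
    {t : ℝ} (ht : t ∈ Icc (0:ℝ) 1) : ∫ z in γ..w t, (φ z + ε)⁻¹ = 1 - t := by
  have := hw.integral_inv_eq hφc hφm hφnn hε ht (right_mem_Icc.2 zero_le_one) ht.2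
    (hw.apply_one ▸ hpos)
  rwa [hw.apply_one] at this

lemma apply_le_apply (hφc : ContinuousOn φ (Ici 0)) (hφm : MonotoneOn φ (Ici 0))
    (hφnn : ∀ x ≥ (0:ℝ), 0 ≤ φ x) {γ₁ γ₂ ε₁ ε₂ : ℝ} {w₁ w₂ : ℝ → ℝ} (hε₁ : 0 ≤ ε₁)
    (hγ : γ₁ ≤ γ₂) (hε : ε₁ ≤ ε₂) (hpos : 0 < φ γ₁ + ε₁)
    (hw₁ : IsSolODE φ ε₁ γ₁ w₁) (hw₂ : IsSolODE φ ε₂ γ₂ w₂) {t : ℝ} (ht : t ∈ Icc (0:ℝ) 1) :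
    w₁ t ≤ w₂ t := by
  by_contra! hlt
  have hγ₁ := hw₁.param_nonneg
  have hle : ∀ ε, ∀ z ≥ γ₁, φ γ₁ + ε ≤ φ z + ε := fun ε z hz =>
    add_le_add_left (hφm hγ₁ (hγ₁.trans hz) hz) ε
  have hpos₂ : 0 < φ γ₂ + ε₂ := hpos.trans_le ((hle ε₁ γ₂ hγ).trans (add_le_add_right hε _))
  have hγy₂ := hw₂.le_apply hφc hφnn (hε₁.trans hε) ht
  have hI : ∀ p ∈ Icc γ₁ (w₁ t), ∀ q ∈ Icc γ₁ (w₁ t),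
      IntervalIntegrable (fun z => (φ z + ε₁)⁻¹) volume p q := fun p hp q hq =>
    ((continuousOn_inv_add hφc hφm hγ₁ hpos).mono (uIcc_subset_Icc hp hq)).intervalIntegrable
  have hγ₂m : γ₂ ∈ Icc γ₁ (w₁ t) := ⟨hγ, hγy₂.trans hlt.le⟩
  have hy₂m : w₂ t ∈ Icc γ₁ (w₁ t) := ⟨hγ.trans hγy₂, hlt.le⟩
  have hy₁m : w₁ t ∈ Icc γ₁ (w₁ t) := ⟨hγ.trans (hγy₂.trans hlt.le), le_rfl⟩
  have hfirst : 0 ≤ ∫ z in γ₁..γ₂, (φ z + ε₁)⁻¹ :=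
    intervalIntegral.integral_nonneg hγ fun z hz => (inv_pos.2 (hpos.trans_le (hle ε₁ z hz.1))).le
  have hmiddle : ∫ z in γ₂..w₂ t, (φ z + ε₂)⁻¹ ≤ ∫ z in γ₂..w₂ t, (φ z + ε₁)⁻¹ :=
    intervalIntegral.integral_mono_on hγy₂
      ((continuousOn_inv_add hφc hφm (hγ₁.trans hγ) hpos₂).intervalIntegrable_of_Icc hγy₂)
      (hI _ hγ₂m _ hy₂m) fun z hz =>
        inv_anti₀ (hpos.trans_le (hle ε₁ z (hγ.trans hz.1))) (add_le_add_right hε _)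
  have hlast : 0 < ∫ z in w₂ t..w₁ t, (φ z + ε₁)⁻¹ :=
    intervalIntegral.intervalIntegral_pos_of_pos_on (hI _ hy₂m _ hy₁m)
      (fun z hz => inv_pos.2 (hpos.trans_le (hle ε₁ z (hγ.trans (hγy₂.trans hz.1.le))))) hlt
  have h₁ := hw₁.integral_inv_eq_one_sub hφc hφm hφnn hε₁ hpos ht
  have h₂ := hw₂.integral_inv_eq_one_sub hφc hφm hφnn (hε₁.trans hε) hpos₂ ht
  rw [← intervalIntegral.integral_add_adjacent_intervals (hI _ ⟨le_rfl, hy₁m.1⟩ _ hγ₂m)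
      (hI _ hγ₂m _ hy₁m),
    ← intervalIntegral.integral_add_adjacent_intervals (hI _ hγ₂m _ hy₂m) (hI _ hy₂m _ hy₁m)] at h₁
  linarith

lemma abs_sub_apply_le (hφc : ContinuousOn φ (Ici 0)) (hφm : MonotoneOn φ (Ici 0))
    (hφnn : ∀ x ≥ (0:ℝ), 0 ≤ φ x) {c d M γ₁ γ₂ ε₁ ε₂ : ℝ} {w₁ w₂ : ℝ → ℝ}
    (hc : 0 ≤ c) (hd : 0 < d) (hε₁ : 0 ≤ ε₁) (hε₂ : 0 ≤ ε₂) (hcγ₁ : c ≤ γ₁) (hcγ₂ : c ≤ γ₂)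
    (hdε₁ : d ≤ φ c + ε₁) (hdε₂ : d ≤ φ c + ε₂)
    (hw₁ : IsSolODE φ ε₁ γ₁ w₁) (hw₂ : IsSolODE φ ε₂ γ₂ w₂) {t : ℝ} (ht : t ∈ Icc (0:ℝ) 1)
    (hM₁ : w₁ t ≤ M) (hM₂ : w₂ t ≤ M) :
    |w₁ t - w₂ t| ≤ (φ M + ε₂) * (|γ₁ - γ₂| / d + M * |ε₁ - ε₂| / d ^ 2) := by
  set y₁ := w₁ t
  set y₂ := w₂ t
  have hγy₁ := hw₁.le_apply hφc hφnn hε₁ ht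
  have hγy₂ := hw₂.le_apply hφc hφnn hε₂ ht
  have hγ₁m : γ₁ ∈ Icc c M := ⟨hcγ₁, hγy₁.trans hM₁⟩
  have hγ₂m : γ₂ ∈ Icc c M := ⟨hcγ₂, hγy₂.trans hM₂⟩
  have hy₁m : y₁ ∈ Icc c M := ⟨hcγ₁.trans hγy₁, hM₁⟩
  have hy₂m : y₂ ∈ Icc c M := ⟨hcγ₂.trans hγy₂, hM₂⟩
  have hdle : ∀ {ε}, d ≤ φ c + ε → ∀ z ∈ Icc c M, d ≤ φ z + ε := fun h z hz =>
    h.trans (add_le_add_left (hφm hc (hc.trans hz.1) hz.1) _)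
  have hI : ∀ {ε}, d ≤ φ c + ε → ∀ p ∈ Icc c M, ∀ q ∈ Icc c M,
      IntervalIntegrable (fun z => (φ z + ε)⁻¹) volume p q := fun h p hp q hq =>
    ((continuousOn_inv_add hφc hφm hc (hd.trans_le h)).mono
      (uIcc_subset_Icc hp hq)).intervalIntegrable
  have hsplit : ∫ z in y₂..y₁, (φ z + ε₂)⁻¹
      = (∫ z in γ₂..γ₁, (φ z + ε₂)⁻¹) + ∫ z in γ₁..y₁, ((φ z + ε₂)⁻¹ - (φ z + ε₁)⁻¹) := by
    have h₁ := hw₁.integral_inv_eq_one_sub hφc hφm hφnn hε₁ (hd.trans_le (hdle hdε₁ γ₁ hγ₁m)) ht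
    have h₂ := hw₂.integral_inv_eq_one_sub hφc hφm hφnn hε₂ (hd.trans_le (hdle hdε₂ γ₂ hγ₂m)) ht
    have hγ := intervalIntegral.integral_add_adjacent_intervals
      (hI hdε₂ _ hγ₂m _ hγ₁m) (hI hdε₂ _ hγ₁m _ hy₁m)
    have hy := intervalIntegral.integral_add_adjacent_intervals
      (hI hdε₂ _ hγ₂m _ hy₂m) (hI hdε₂ _ hy₂m _ hy₁m)
    rw [intervalIntegral.integral_sub (hI hdε₂ _ hγ₁m _ hy₁m) (hI hdε₁ _ hγ₁m _ hy₁m)]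
    linarith
  have hMpos : 0 < φ M + ε₂ := hd.trans_le (hdle hdε₂ M ⟨hcγ₂.trans (hγy₂.trans hM₂), le_rfl⟩)
  have hlower : (φ M + ε₂)⁻¹ * |y₁ - y₂| ≤ |∫ z in y₂..y₁, (φ z + ε₂)⁻¹| :=
    mul_abs_sub_le_abs_intervalIntegral (hI hdε₂ _ hy₂m _ hy₁m) fun z hz =>
      have hz' := uIcc_subset_Icc hy₂m hy₁m hz
      inv_anti₀ (hd.trans_le (hdle hdε₂ z hz'))
        (add_le_add_left (hφm (hc.trans hz'.1) (hc.trans hy₁m.1 |>.trans hM₁) hz'.2) _)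
  have hupper₁ : |∫ z in γ₂..γ₁, (φ z + ε₂)⁻¹| ≤ d⁻¹ * |γ₁ - γ₂| :=
    intervalIntegral.norm_integral_le_of_norm_le_const fun z hz => by
      have hz' := uIcc_subset_Icc hγ₂m hγ₁m (uIoc_subset_uIcc hz)
      have hpos := hd.trans_le (hdle hdε₂ z hz')
      rw [Real.norm_of_nonneg (inv_pos.2 hpos).le]
      exact inv_anti₀ hd (hdle hdε₂ z hz')
  have hupper₂ : |∫ z in γ₁..y₁, ((φ z + ε₂)⁻¹ - (φ z + ε₁)⁻¹)|
      ≤ |ε₁ - ε₂| / d ^ 2 * |y₁ - γ₁| := by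
    refine intervalIntegral.norm_integral_le_of_norm_le_const (E := ℝ) fun z hz => ?_
    have hz' := uIcc_subset_Icc hγ₁m hy₁m (uIoc_subset_uIcc hz)
    simpa only [Real.norm_eq_abs, add_sub_add_left_eq_sub] using
      abs_inv_sub_inv_le hd (hdle hdε₂ z hz') (hdle hdε₁ z hz')
  have hyγ : |y₁ - γ₁| ≤ M := by
    rw [abs_of_nonneg (sub_nonneg.2 hγy₁)]
    linarith [hc.trans hcγ₁]
  calc |y₁ - y₂| = (φ M + ε₂) * ((φ M + ε₂)⁻¹ * |y₁ - y₂|) := by field_simp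
    _ ≤ (φ M + ε₂) * (d⁻¹ * |γ₁ - γ₂| + |ε₁ - ε₂| / d ^ 2 * M) := by
      gcongr
      calc (φ M + ε₂)⁻¹ * |y₁ - y₂| ≤ |∫ z in y₂..y₁, (φ z + ε₂)⁻¹| := hlower
        _ ≤ d⁻¹ * |γ₁ - γ₂| + |ε₁ - ε₂| / d ^ 2 * |y₁ - γ₁| := by
          rw [hsplit]; exact (abs_add_le _ _).trans (add_le_add hupper₁ hupper₂)
        _ ≤ d⁻¹ * |γ₁ - γ₂| + |ε₁ - ε₂| / d ^ 2 * M := by gcongr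
    _ = (φ M + ε₂) * (|γ₁ - γ₂| / d + M * |ε₁ - ε₂| / d ^ 2) := by ring

/-- Uniqueness for `γ = ε = 0`: a solution reaching a level `w t > 0` would cross every level
`δ ∈ (0, w t)` within time `1`, i.e. `∫_δ^{w t} dz / φ z ≤ 1`, against the Osgood condition. -/
lemma apply_eq_zero (hφc : ContinuousOn φ (Ici 0)) (hφm : MonotoneOn φ (Ici 0))
    (hφnn : ∀ x ≥ (0:ℝ), 0 ≤ φ x) (hφpos : ∀ x > (0:ℝ), 0 < φ x) (hOsg : OsgoodCondition φ)
    (hw : IsSolODE φ 0 0 w) {t : ℝ} (ht : t ∈ Icc (0:ℝ) 1) : w t = 0 := by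
  by_contra hne
  obtain ⟨δ, hδ, hlt⟩ :=
    hOsg.exists_lt_integral_inv hφc hφpos ((hw.2.1 t ht).lt_of_ne' hne) 1
  obtain ⟨s, hs, hws⟩ := intermediate_value_Icc' ht.2 (hw.1.mono (Icc_subset_Icc_left ht.1))
    (show δ ∈ Icc (w 1) (w t) from hw.apply_one ▸ ⟨hδ.1.le, hδ.2.le⟩)
  have hident := hw.integral_inv_eq hφc hφm hφnn le_rfl ht ⟨ht.1.trans hs.1, hs.2⟩ hs.1
    (by rw [hws, add_zero]; exact hφpos δ hδ.1)
  simp only [add_zero, hws] at hident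
  linarith [hs.2, ht.1]

lemma apply_lt_of_lt_integral (hφc : ContinuousOn φ (Ici 0)) (hφm : MonotoneOn φ (Ici 0))
    (hφnn : ∀ x ≥ (0:ℝ), 0 ≤ φ x) (hφpos : ∀ x > (0:ℝ), 0 < φ x) {δ η : ℝ} (hδ : δ ∈ Ioo 0 η)
    (hη : 2 < ∫ z in δ..η, (φ z)⁻¹) (hγδ : γ ≤ δ) (hε : 0 ≤ ε) (hεδ : ε ≤ φ δ)
    (hpos : 0 < φ γ + ε) (hw : IsSolODE φ ε γ w) {t : ℝ} (ht : t ∈ Icc (0:ℝ) 1) : w t < η := by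
  by_contra! hηw
  have hγ := hw.param_nonneg
  have hφδ := hφpos δ hδ.1
  have hcont : ContinuousOn (fun z => (φ z + ε)⁻¹) (Icc γ (w t)) :=
    continuousOn_inv_add hφc hφm hγ hpos
  have hsub : ∫ z in δ..η, (φ z + ε)⁻¹ ≤ ∫ z in γ..w t, (φ z + ε)⁻¹ :=
    intervalIntegral.integral_mono_interval hγδ hδ.2.le hηw
      ((ae_restrict_iff' measurableSet_Ioc).2 (ae_of_all _ fun z hz =>
        (inv_pos.2 (hpos.trans_le (add_le_add_left (hφm hγ (hγ.trans hz.1.le) hz.1.le) ε))).le))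
      (hcont.intervalIntegrable_of_Icc (hw.le_apply hφc hφnn hε ht))
  have hhalf : ∫ z in δ..η, (φ z)⁻¹ ≤ 2 * ∫ z in δ..η, (φ z + ε)⁻¹ := by
    rw [← intervalIntegral.integral_const_mul]
    refine intervalIntegral.integral_mono_on hδ.2.le ?_ ?_ fun z hz => ?_
    · exact ((hφc.mono fun _ hz => hδ.1.le.trans hz.1).inv₀ fun z hz =>
        (hφpos z (hδ.1.trans_le hz.1)).ne').intervalIntegrable_of_Icc hδ.2.le
    · exact (continuousOn_const.mul (continuousOn_inv_add hφc hφm hδ.1.le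
        (by linarith))).intervalIntegrable_of_Icc hδ.2.le
    · have hφz := hφm hδ.1.le (hδ.1.le.trans hz.1) hz.1
      rw [← div_eq_mul_inv, le_div_iff₀ (by linarith), inv_mul_le_iff₀ (by linarith)]
      linarith
  rw [hw.integral_inv_eq_one_sub hφc hφm hφnn hε hpos ht] at hsub
  linarith [ht.1]

end IsSolODE

section ParameterContinuity

variable {φ : ℝ → ℝ} {u : ℝ → ℝ → ℝ → ℝ} {t : ℝ}

lemma map_add_pos_of_pos_or_pos (hφnn : ∀ x ≥ (0:ℝ), 0 ≤ φ x) (hφpos : ∀ x > (0:ℝ), 0 < φ x)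
    {γ ε : ℝ} (hγ : 0 ≤ γ) (hε : 0 ≤ ε) (h : 0 < γ ∨ 0 < ε) : 0 < φ γ + ε := by
  rcases h with h | h
  · exact add_pos_of_pos_of_nonneg (hφpos γ h) hε
  · exact add_pos_of_nonneg_of_pos (hφnn γ hγ) h

lemma continuousWithinAt_solution_of_pos (hφc : ContinuousOn φ (Ici 0))
    (hφm : MonotoneOn φ (Ici 0)) (hφnn : ∀ x ≥ (0:ℝ), 0 ≤ φ x) (hφpos : ∀ x > (0:ℝ), 0 < φ x)
    (hu : ∀ γ ≥ (0:ℝ), ∀ ε ≥ (0:ℝ), IsSolODE φ ε γ (u γ ε)) (ht : t ∈ Icc (0:ℝ) 1)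
    {γ₀ ε₀ : ℝ} (hγ₀ : 0 ≤ γ₀) (hε₀ : 0 ≤ ε₀) (h₀ : 0 < γ₀ ∨ 0 < ε₀) :
    ContinuousWithinAt (fun p : ℝ × ℝ => u p.1 p.2 t) (Ici 0 ×ˢ Ici 0) (γ₀, ε₀) := by
  set s : Set (ℝ × ℝ) := Ici 0 ×ˢ Ici 0
  set c := γ₀ / 2
  set d := (φ c + ε₀) / 2
  set M := u (γ₀ + 1) (ε₀ + 1) t
  have hc : 0 ≤ c := by positivity
  have hcγ₀ : c ≤ γ₀ := half_le_self hγ₀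
  have hpos : 0 < φ c + ε₀ := map_add_pos_of_pos_or_pos hφnn hφpos hc hε₀ (h₀.imp_left half_pos)
  have hφc_le : ∀ γ ≥ c, φ c ≤ φ γ := fun γ hγ => hφm hc (hc.trans hγ) hγ
  have hfst : Tendsto Prod.fst (𝓝[s] (γ₀, ε₀)) (𝓝 γ₀) :=
    (continuous_fst.tendsto _).mono_left nhdsWithin_le_nhds
  have hsnd : Tendsto Prod.snd (𝓝[s] (γ₀, ε₀)) (𝓝 ε₀) :=
    (continuous_snd.tendsto _).mono_left nhdsWithin_le_nhds
  have hcγ : ∀ᶠ p in 𝓝[s] (γ₀, ε₀), c ≤ p.1 := by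
    rcases hγ₀.eq_or_lt with h | h
    · filter_upwards [self_mem_nhdsWithin] with p hp
      simpa [c, ← h] using hp.1
    · exact (hfst.eventually_const_lt (half_lt_self h)).mono fun p hp => hp.le
  have hdε : ∀ᶠ p in 𝓝[s] (γ₀, ε₀), d ≤ φ c + p.2 :=
    (hsnd.eventually_const_lt (show (ε₀ - φ c) / 2 < ε₀ by linarith)).mono fun p hp => by
      simp only [d]; linarith
  have hbound : ∀ᶠ p in 𝓝[s] (γ₀, ε₀), ‖u p.1 p.2 t - u γ₀ ε₀ t‖
      ≤ (φ M + ε₀) * (|p.1 - γ₀| / d + M * |p.2 - ε₀| / d ^ 2) := by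
    filter_upwards [self_mem_nhdsWithin, hcγ, hdε, hfst.eventually_lt_const (lt_add_one γ₀),
      hsnd.eventually_lt_const (lt_add_one ε₀)] with p hp hp₁ hp₂ hp₃ hp₄
    have hM : u p.1 p.2 t ≤ M :=
      IsSolODE.apply_le_apply hφc hφm hφnn hp.2 hp₃.le hp₄.le
        ((half_pos hpos).trans_le (hp₂.trans (add_le_add_left (hφc_le _ hp₁) _)))
        (hu _ hp.1 _ hp.2) (hu _ (by linarith) _ (by linarith)) ht
    have hM₀ : u γ₀ ε₀ t ≤ M :=
      IsSolODE.apply_le_apply hφc hφm hφnn hε₀ (by linarith) (by linarith)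
        (hpos.trans_le (add_le_add_left (hφc_le _ hcγ₀) _))
        (hu _ hγ₀ _ hε₀) (hu _ (by linarith) _ (by linarith)) ht
    exact IsSolODE.abs_sub_apply_le hφc hφm hφnn hc (half_pos hpos) hp.2 hε₀ hp₁ hcγ₀ hp₂
      (half_le_self hpos.le) (hu _ hp.1 _ hp.2) (hu _ hγ₀ _ hε₀) ht hM hM₀
  have hlim : Tendsto (fun p : ℝ × ℝ => (φ M + ε₀) * (|p.1 - γ₀| / d + M * |p.2 - ε₀| / d ^ 2))
      (𝓝[s] (γ₀, ε₀)) (𝓝 0) := by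
    have hcont : Continuous fun p : ℝ × ℝ =>
        (φ M + ε₀) * (|p.1 - γ₀| / d + M * |p.2 - ε₀| / d ^ 2) := by fun_prop
    simpa using (hcont.continuousWithinAt (s := s) (x := (γ₀, ε₀))).tendsto
  exact tendsto_iff_norm_sub_tendsto_zero.2
    (squeeze_zero' (Eventually.of_forall fun _ => norm_nonneg _) hbound hlim)

lemma continuousWithinAt_solution_zero (hφc : ContinuousOn φ (Ici 0))
    (hφm : MonotoneOn φ (Ici 0)) (hφnn : ∀ x ≥ (0:ℝ), 0 ≤ φ x) (hφpos : ∀ x > (0:ℝ), 0 < φ x)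
    (hOsg : OsgoodCondition φ) (hu : ∀ γ ≥ (0:ℝ), ∀ ε ≥ (0:ℝ), IsSolODE φ ε γ (u γ ε))
    (ht : t ∈ Icc (0:ℝ) 1) :
    ContinuousWithinAt (fun p : ℝ × ℝ => u p.1 p.2 t) (Ici 0 ×ˢ Ici 0) (0, 0) := by
  have hu₀ : u 0 0 t = 0 := (hu 0 le_rfl 0 le_rfl).apply_eq_zero hφc hφm hφnn hφpos hOsg ht
  change Tendsto _ _ (𝓝 (u 0 0 t))
  rw [hu₀]
  refine tendsto_order.2 ⟨fun a ha => ?_, fun η hη => ?_⟩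
  · filter_upwards [self_mem_nhdsWithin] with p hp
    exact ha.trans_le ((hu _ hp.1 _ hp.2).2.1 t ht)
  · obtain ⟨δ, hδ, hK⟩ := hOsg.exists_lt_integral_inv hφc hφpos hη 2
    have hφδ := hφpos δ hδ.1
    filter_upwards [self_mem_nhdsWithin, nhdsWithin_le_nhds
      ((continuous_fst.tendsto _).eventually (gt_mem_nhds hδ.1)), nhdsWithin_le_nhds
      ((continuous_snd.tendsto _).eventually (gt_mem_nhds hφδ))] with ⟨γ, ε⟩ ⟨hγ, hε⟩ hγδ hεδ
    by_cases h₀ : 0 < γ ∨ 0 < ε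
    · exact (hu γ hγ ε hε).apply_lt_of_lt_integral hφc hφm hφnn hφpos hδ hK hγδ.le hε hεδ.le
        (map_add_pos_of_pos_or_pos hφnn hφpos hγ hε h₀) ht
    · simp only [not_or, not_lt] at h₀
      obtain rfl : γ = 0 := le_antisymm h₀.1 hγ
      obtain rfl : ε = 0 := le_antisymm h₀.2 hε
      simpa [hu₀] using hη

lemma continuousOn_solution (hφc : ContinuousOn φ (Ici 0))
    (hφm : MonotoneOn φ (Ici 0)) (hφnn : ∀ x ≥ (0:ℝ), 0 ≤ φ x) (hφpos : ∀ x > (0:ℝ), 0 < φ x)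
    (hOsg : OsgoodCondition φ) (hu : ∀ γ ≥ (0:ℝ), ∀ ε ≥ (0:ℝ), IsSolODE φ ε γ (u γ ε))
    (ht : t ∈ Icc (0:ℝ) 1) :
    ContinuousOn (fun p : ℝ × ℝ => u p.1 p.2 t) (Ici 0 ×ˢ Ici 0) := by
  rintro ⟨γ₀, ε₀⟩ ⟨hγ₀, hε₀⟩
  by_cases h₀ : 0 < γ₀ ∨ 0 < ε₀
  · exact continuousWithinAt_solution_of_pos hφc hφm hφnn hφpos hu ht hγ₀ hε₀ h₀
  · simp only [not_or, not_lt] at h₀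
    obtain rfl : γ₀ = 0 := le_antisymm h₀.1 hγ₀
    obtain rfl : ε₀ = 0 := le_antisymm h₀.2 hε₀
    exact continuousWithinAt_solution_zero hφc hφm hφnn hφpos hOsg hu ht

end ParameterContinuity

theorem stmt2_general (φ : ℝ → ℝ)
    (hφc : ContinuousOn φ (Set.Ici 0)) (hφm : MonotoneOn φ (Set.Ici 0))
    (hφnn : ∀ x ≥ (0:ℝ), 0 ≤ φ x) (hφpos : ∀ x > (0:ℝ), 0 < φ x)
    (hφOsg : OsgoodCondition φ)
    (u : ℝ → ℝ → ℝ → ℝ) (hu : ∀ γ ≥ (0:ℝ), ∀ ε ≥ (0:ℝ), IsSolODE φ ε γ (u γ ε))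
    (t : ℝ) (ht : t ∈ Set.Icc (0:ℝ) 1) :
    (∀ ε ≥ (0:ℝ), ContinuousOn (fun γ => u γ ε t) (Set.Ici 0)) ∧
    (∀ γ ≥ (0:ℝ), ContinuousOn (fun ε => u γ ε t) (Set.Ici 0)) := by
  have hcont := continuousOn_solution hφc hφm hφnn hφpos hφOsg hu ht
  exact ⟨fun ε hε => hcont.comp (continuous_id.prodMk continuous_const).continuousOn
      fun γ hγ => ⟨hγ, hε⟩,
    fun γ hγ => hcont.comp (continuous_const.prodMk continuous_id).continuousOn
      fun ε hε => ⟨hγ, hε⟩⟩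

/-- for the unique solutions `u γ ε` of
`u t = γ + ∫ₜ¹ (φ (u s) + ε) ds`, for fixed `t ∈ [0,1]` the map `γ ↦ u^{γ,ε}(t)`
is continuous (on `[0,∞)`), and for fixed `γ` the map `ε ↦ u^{γ,ε}(t)` is continuous. -/
theorem stmt2 (φ : ℝ → ℝ) (a b : ℝ) (ha : 0 ≤ a) (hb : 0 ≤ b)
    (hφc : ContinuousOn φ (Set.Ici 0)) (hφm : MonotoneOn φ (Set.Ici 0))
    (hφnn : ∀ x ≥ (0:ℝ), 0 ≤ φ x) (hφpos : ∀ x > (0:ℝ), 0 < φ x)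
    (hφgrow : ∀ x ≥ (0:ℝ), φ x ≤ a * x + b) (hφOsg : OsgoodCondition φ)
    (u : ℝ → ℝ → ℝ → ℝ) (hu : ∀ γ ≥ (0:ℝ), ∀ ε ≥ (0:ℝ), IsSolODE φ ε γ (u γ ε))
    (t : ℝ) (ht : t ∈ Set.Icc (0:ℝ) 1) :
    (∀ ε ≥ (0:ℝ), ContinuousOn (fun γ => u γ ε t) (Set.Ici 0)) ∧
    (∀ γ ≥ (0:ℝ), ContinuousOn (fun ε => u γ ε t) (Set.Ici 0)) :=
  stmt2_general φ hφc hφm hφnn hφpos hφOsg u hu t ht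
end

section
/- In the setting of the Φ_ε-envelope: let θ(τ) denote the Φ_ε-envelope at τ ∈ [0,1] of a continuous bounded nonnegative function X on [0,1]. Then: (1) if τₙ → τ then θ(τₙ) → θ(τ); (2) if X(1) = 0 then θ(1) = 0; (3) for α > 0, the Φ_ε-envelope θ_α of αX satisfies θ_α(τ) → θ(τ) as α → 1. -/
open MeasureTheory Set Filter Topology

/-- The Φ_ε-envelope of `X` at `τ`, relative to a family `u γ` of solutions of the
backward equation `u^γ(t) = γ + ∫ₜ¹ (Φ(u^γ(s)) + ε) ds`:
the infimum of the values `u^γ(τ)` over those `γ ≥ 0` with `u^γ(τ) ≥ X(τ)`. -/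
noncomputable def envelope (u : ℝ → ℝ → ℝ) (X : ℝ → ℝ) (τ : ℝ) : ℝ :=
  sInf {v : ℝ | ∃ γ : ℝ, 0 ≤ γ ∧ v = u γ τ ∧ X τ ≤ u γ τ}

/-!
With the travel time `G y = ∫₀ʸ dx / (Φ x + ε)`, every solution of the backward equation satisfies
`G (u^γ τ) = G γ + (1 - τ)`. Since `G` is a strictly increasing homeomorphism onto its image,
`γ ↦ u^γ τ` is an increasing bijection of `[0, ∞)` onto `[u⁰ τ, ∞)`, so the envelope is simply
`θ τ = max (X τ) (u⁰ τ)`. All three claims follow from the continuity of `X` and `u⁰` and from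
`u⁰ 1 = 0`.
-/

/-- `Φ y + ε`, extended to `y < 0` by `Φ 0 + ε` so that it is continuous and
positive on all of `ℝ`. -/
noncomputable def rate (Φ : ℝ → ℝ) (ε : ℝ) (y : ℝ) : ℝ := Φ (max y 0) + ε

noncomputable def travelTime (Φ : ℝ → ℝ) (ε : ℝ) (y : ℝ) : ℝ := ∫ s in (0:ℝ)..y, (rate Φ ε s)⁻¹

section

variable {Φ : ℝ → ℝ} {ε : ℝ}

lemma continuous_rate (hΦc : ContinuousOn Φ (Ici 0)) : Continuous (rate Φ ε) :=
  (hΦc.comp_continuous (continuous_id.max continuous_const) fun y => le_max_right y 0).add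
    continuous_const

lemma rate_pos (hΦnn : ∀ x ≥ (0:ℝ), 0 ≤ Φ x) (hε : 0 < ε) (y : ℝ) : 0 < rate Φ ε y :=
  add_pos_of_nonneg_of_pos (hΦnn _ (le_max_right y 0)) hε

lemma rate_of_nonneg {y : ℝ} (hy : 0 ≤ y) : rate Φ ε y = Φ y + ε := by
  rw [rate, max_eq_left hy]

lemma hasDerivAt_travelTime (hΦc : ContinuousOn Φ (Ici 0)) (hΦnn : ∀ x ≥ (0:ℝ), 0 ≤ Φ x)
    (hε : 0 < ε) (y : ℝ) : HasDerivAt (travelTime Φ ε) (rate Φ ε y)⁻¹ y := by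
  have hc : Continuous fun s => (rate Φ ε s)⁻¹ :=
    (continuous_rate hΦc).inv₀ fun s => (rate_pos hΦnn hε s).ne'
  exact intervalIntegral.integral_hasDerivAt_right (hc.intervalIntegrable 0 y)
    (hc.stronglyMeasurableAtFilter _ _) hc.continuousAt

lemma continuous_travelTime (hΦc : ContinuousOn Φ (Ici 0)) (hΦnn : ∀ x ≥ (0:ℝ), 0 ≤ Φ x)
    (hε : 0 < ε) : Continuous (travelTime Φ ε) :=
  continuous_iff_continuousAt.2 fun y => (hasDerivAt_travelTime hΦc hΦnn hε y).continuousAt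

lemma strictMono_travelTime (hΦc : ContinuousOn Φ (Ici 0)) (hΦnn : ∀ x ≥ (0:ℝ), 0 ≤ Φ x)
    (hε : 0 < ε) : StrictMono (travelTime Φ ε) :=
  strictMono_of_deriv_pos fun y => by
    rw [(hasDerivAt_travelTime hΦc hΦnn hε y).deriv]
    exact inv_pos.2 (rate_pos hΦnn hε y)

lemma travelTime_zero : travelTime Φ ε 0 = 0 := intervalIntegral.integral_same

namespace IsSolODE

variable {γ : ℝ} {v : ℝ → ℝ}

lemma apply_one_s11 (hv : IsSolODE Φ ε γ v) : v 1 = γ := by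
  simpa using hv.2.2 1 (right_mem_Icc.2 zero_le_one)

lemma exists_hasDerivAt_extension (hΦc : ContinuousOn Φ (Ici 0)) (hv : IsSolODE Φ ε γ v) :
    ∃ w : ℝ → ℝ, EqOn v w (Icc 0 1) ∧ ∀ t ∈ Icc (0:ℝ) 1, HasDerivAt w (-rate Φ ε (w t)) t := by
  obtain ⟨hvc, hvnn, hveq⟩ := hv
  set g : ℝ → ℝ := fun s => rate Φ ε (IccExtend zero_le_one ((Icc 0 1).domRestrict v) s)
  have hgc : Continuous g :=
    (continuous_rate hΦc).comp (continuous_IccExtend_iff.2 hvc.domRestrict)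
  have hg : ∀ s ∈ Icc (0:ℝ) 1, g s = Φ (v s) + ε := fun s hs => by
    simp only [g, IccExtend_of_mem _ _ hs]
    exact rate_of_nonneg (hvnn s hs)
  have hvw : EqOn v (fun t => γ - ∫ s in (1:ℝ)..t, g s) (Icc 0 1) := fun t ht => by
    have hint : ∫ s in Ioc t 1, (Φ (v s) + ε) = ∫ s in Ioc t 1, g s :=
      setIntegral_congr_fun measurableSet_Ioc fun s hs =>
        (hg s ⟨ht.1.trans hs.1.le, hs.2⟩).symm
    show v t = γ - ∫ s in (1:ℝ)..t, g s
    rw [hveq t ht, hint, intervalIntegral.integral_symm, intervalIntegral.integral_of_le ht.2]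
    ring
  refine ⟨_, hvw, fun t ht => ?_⟩
  have hderiv := (intervalIntegral.integral_hasDerivAt_right (hgc.intervalIntegrable 1 t)
    (hgc.stronglyMeasurableAtFilter _ _) hgc.continuousAt).const_sub γ
  have hwt : γ - ∫ s in (1:ℝ)..t, g s = v t := (hvw ht).symm
  rwa [hg t ht, ← rate_of_nonneg (hvnn t ht), ← hwt] at hderiv

lemma travelTime_apply (hΦc : ContinuousOn Φ (Ici 0)) (hΦnn : ∀ x ≥ (0:ℝ), 0 ≤ Φ x)
    (hε : 0 < ε) (hv : IsSolODE Φ ε γ v) {t : ℝ} (ht : t ∈ Icc (0:ℝ) 1) :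
    travelTime Φ ε (v t) = travelTime Φ ε γ + (1 - t) := by
  obtain ⟨w, hvw, hw⟩ := hv.exists_hasDerivAt_extension hΦc
  have hH : ∀ s ∈ Icc (0:ℝ) 1, HasDerivAt (fun s => travelTime Φ ε (w s) + s) 0 s := by
    intro s hs
    have h := ((hasDerivAt_travelTime hΦc hΦnn hε (w s)).comp s (hw s hs)).add (hasDerivAt_id s)
    rwa [mul_neg, inv_mul_cancel₀ (rate_pos hΦnn hε (w s)).ne', neg_add_cancel] at h
  have hconst := constant_of_has_deriv_right_zero
    (fun s hs => (hH s hs).continuousAt.continuousWithinAt)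
    (fun s hs => (hH s (Ico_subset_Icc_self hs)).hasDerivWithinAt)
  have h1 := hconst 1 (right_mem_Icc.2 zero_le_one)
  have ht' := hconst t ht
  rw [← hvw (right_mem_Icc.2 zero_le_one), hv.apply_one_s11] at h1
  rw [← hvw ht] at ht'
  linarith

end IsSolODE

variable {u : ℝ → ℝ → ℝ}

lemma solution_le_solution (hΦc : ContinuousOn Φ (Ici 0)) (hΦnn : ∀ x ≥ (0:ℝ), 0 ≤ Φ x)
    (hε : 0 < ε) (hu : ∀ γ ≥ (0:ℝ), IsSolODE Φ ε γ (u γ)) {τ : ℝ} (hτ : τ ∈ Icc (0:ℝ) 1)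
    {γ : ℝ} (hγ : 0 ≤ γ) : u 0 τ ≤ u γ τ := by
  have hG := strictMono_travelTime hΦc hΦnn hε
  rw [← hG.le_iff_le, (hu 0 le_rfl).travelTime_apply hΦc hΦnn hε hτ,
    (hu γ hγ).travelTime_apply hΦc hΦnn hε hτ, travelTime_zero]
  gcongr
  exact travelTime_zero (Φ := Φ) (ε := ε) ▸ hG.monotone hγ

lemma exists_solution_eq (hΦc : ContinuousOn Φ (Ici 0)) (hΦnn : ∀ x ≥ (0:ℝ), 0 ≤ Φ x)
    (hε : 0 < ε) (hu : ∀ γ ≥ (0:ℝ), IsSolODE Φ ε γ (u γ)) {τ : ℝ} (hτ : τ ∈ Icc (0:ℝ) 1)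
    {y : ℝ} (hy : u 0 τ ≤ y) : ∃ γ ≥ 0, u γ τ = y := by
  have hG := strictMono_travelTime hΦc hΦnn hε
  have hG0 := (hu 0 le_rfl).travelTime_apply hΦc hΦnn hε hτ
  rw [travelTime_zero, zero_add] at hG0
  have hy0 : 0 ≤ y := ((hu 0 le_rfl).2.1 τ hτ).trans hy
  have hmem : travelTime Φ ε y - (1 - τ) ∈ Icc (travelTime Φ ε 0) (travelTime Φ ε y) := by
    constructor
    · rw [travelTime_zero, sub_nonneg, ← hG0]
      exact hG.monotone hy
    · linarith [hτ.2]
  obtain ⟨γ, hγ, hγy⟩ :=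
    intermediate_value_Icc hy0 (continuous_travelTime hΦc hΦnn hε).continuousOn hmem
  refine ⟨γ, hγ.1, hG.injective ?_⟩
  rw [(hu γ hγ.1).travelTime_apply hΦc hΦnn hε hτ, hγy]
  ring

lemma envelope_eq_max (hΦc : ContinuousOn Φ (Ici 0)) (hΦnn : ∀ x ≥ (0:ℝ), 0 ≤ Φ x)
    (hε : 0 < ε) (hu : ∀ γ ≥ (0:ℝ), IsSolODE Φ ε γ (u γ)) (Y : ℝ → ℝ) (τ : ℝ)
    (hτ : τ ∈ Icc (0:ℝ) 1) : envelope u Y τ = max (Y τ) (u 0 τ) := by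
  obtain ⟨γ, hγ, hγY⟩ := exists_solution_eq hΦc hΦnn hε hu hτ (le_max_right (Y τ) (u 0 τ))
  refine IsLeast.csInf_eq ⟨⟨γ, hγ, hγY.symm, hγY ▸ le_max_left _ _⟩, ?_⟩
  rintro _ ⟨γ', hγ', rfl, hY⟩
  exact max_le hY (solution_le_solution hΦc hΦnn hε hu hτ hγ')

end

theorem stmt11_general (Φ : ℝ → ℝ)
    (hΦc : ContinuousOn Φ (Set.Ici 0))
    (hΦnn : ∀ x ≥ (0:ℝ), 0 ≤ Φ x)
    (ε : ℝ) (hε : 0 < ε)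
    (X : ℝ → ℝ) (hXc : ContinuousOn X (Set.Icc 0 1))
    (u : ℝ → ℝ → ℝ) (hu : ∀ γ ≥ (0:ℝ), IsSolODE Φ ε γ (u γ)) :
    (∀ (τs : ℕ → ℝ) (τ : ℝ), (∀ n, τs n ∈ Set.Icc (0:ℝ) 1) → τ ∈ Set.Icc (0:ℝ) 1 →
      Filter.Tendsto τs Filter.atTop (nhds τ) →
      Filter.Tendsto (fun n => envelope u X (τs n)) Filter.atTop (nhds (envelope u X τ))) ∧
    (X 1 = 0 → envelope u X 1 = 0) ∧
    (∀ τ ∈ Set.Icc (0:ℝ) 1,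
      Filter.Tendsto (fun α : ℝ => envelope u (fun t => α * X t) τ)
        (nhdsWithin 1 (Set.Ioi 0)) (nhds (envelope u X τ))) := by
  have henv := envelope_eq_max hΦc hΦnn hε hu
  refine ⟨fun τs τ hτs hτ hlim => ?_, fun hX1 => ?_, fun τ hτ => ?_⟩
  · have hθ : ContinuousWithinAt (fun t => max (X t) (u 0 t)) (Icc 0 1) τ :=
      (hXc.sup (hu 0 le_rfl).1) τ hτ
    rw [henv X τ hτ]
    exact (hθ.tendsto.comp (tendsto_nhdsWithin_iff.2 ⟨hlim, .of_forall hτs⟩)).congr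
      fun n => (henv X (τs n) (hτs n)).symm
  · rw [henv X 1 (right_mem_Icc.2 zero_le_one), hX1, (hu 0 le_rfl).apply_one_s11, max_self]
  · have hmax : Continuous fun α : ℝ => max (α * X τ) (u 0 τ) := by fun_prop
    rw [henv X τ hτ, ← one_mul (X τ)]
    exact ((hmax.tendsto 1).mono_left nhdsWithin_le_nhds).congr
      fun α => (henv (fun t => α * X t) τ hτ).symm

/-- properties of the Φ_ε-envelope `θ` of a continuous bounded
nonnegative `X`: (1) `τₙ → τ` implies `θ(τₙ) → θ(τ)`; (2) if `X(1) = 0` then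
`θ(1) = 0`; (3) the envelope `θ_α` of `αX` satisfies `θ_α(τ) → θ(τ)` as `α → 1`. -/
theorem stmt11 (Φ : ℝ → ℝ) (a b : ℝ) (ha : 0 ≤ a) (hb : 0 ≤ b)
    (hΦc : ContinuousOn Φ (Set.Ici 0)) (hΦm : MonotoneOn Φ (Set.Ici 0))
    (hΦnn : ∀ x ≥ (0:ℝ), 0 ≤ Φ x) (hΦpos : ∀ x > (0:ℝ), 0 < Φ x)
    (hΦgrow : ∀ x ≥ (0:ℝ), Φ x ≤ a * x + b) (hΦOsg : OsgoodCondition Φ)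
    (ε : ℝ) (hε : 0 < ε)
    (X : ℝ → ℝ) (C : ℝ) (hXc : ContinuousOn X (Set.Icc 0 1))
    (hXnn : ∀ t ∈ Set.Icc (0:ℝ) 1, 0 ≤ X t) (hXC : ∀ t ∈ Set.Icc (0:ℝ) 1, X t ≤ C)
    (u : ℝ → ℝ → ℝ) (hu : ∀ γ ≥ (0:ℝ), IsSolODE Φ ε γ (u γ)) :
    (∀ (τs : ℕ → ℝ) (τ : ℝ), (∀ n, τs n ∈ Set.Icc (0:ℝ) 1) → τ ∈ Set.Icc (0:ℝ) 1 →
      Filter.Tendsto τs Filter.atTop (nhds τ) →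
      Filter.Tendsto (fun n => envelope u X (τs n)) Filter.atTop (nhds (envelope u X τ))) ∧
    (X 1 = 0 → envelope u X 1 = 0) ∧
    (∀ τ ∈ Set.Icc (0:ℝ) 1,
      Filter.Tendsto (fun α : ℝ => envelope u (fun t => α * X t) τ)
        (nhdsWithin 1 (Set.Ioi 0)) (nhds (envelope u X τ))) :=
  stmt11_general Φ hΦc hΦnn ε hε X hXc u hu
end
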